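/- arXiv:0807.0087 — 2 statements merged into one kernel-verified Lean document; each statement's English description precedes it below -/
import Mathlib

section
/- Let N be a fully resolved tree-child time consistent hybridization network on taxa S. A leaf i is a hybrid leaf with sibling tree leaves j1 and j2 under each of its two parents (so the reduction H_0(i;j1,j2) can be applied) if, and only if, L_N(i,j1) = 2 and L_N(i,j2) = 2. -/
open Classical

/-- A walk (path) in a digraph: a nonempty list of vertices with consecutive arcs. -/
def IsWalk {V : Type} (E : V → V → Prop) (p : List V) : Prop := p ≠ [] ∧ p.Chain' E

/-- A path with origin `u` and end `v`. -/
def WalkFromTo {V : Type} (E : V → V → Prop) (u v : V) (p : List V) : Prop :=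
  IsWalk E p ∧ p.head? = some u ∧ p.getLast? = some v

/-- `v` is a descendant of `u` (possibly trivial path from `u` to `v`). -/
def Desc {V : Type} (E : V → V → Prop) (u v : V) : Prop := Relation.ReflTransGen E u v

/-- A root: a node with no incoming arcs. -/
def IsRootNode {V : Type} (E : V → V → Prop) (r : V) : Prop := ∀ u, ¬ E u r

/-- `u` is a strict ancestor of `v`: `v` is a descendant of `u` and every path
from a root to `v` contains `u`. -/
def StrictAnc {V : Type} (E : V → V → Prop) (u v : V) : Prop :=
  Desc E u v ∧ ∀ (r : V) (p : List V), IsRootNode E r → WalkFromTo E r v p → u ∈ p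

/-- In-degree. -/
noncomputable def indeg {V : Type} (E : V → V → Prop) (v : V) : ℕ := {u | E u v}.ncard
/-- Out-degree. -/
noncomputable def outdeg {V : Type} (E : V → V → Prop) (v : V) : ℕ := {w | E v w}.ncard

/-- Tree node: in-degree at most 1. -/
def IsTreeNode {V : Type} (E : V → V → Prop) (v : V) : Prop := indeg E v ≤ 1
/-- Hybrid node: in-degree at least 2. -/
def IsHybrid {V : Type} (E : V → V → Prop) (v : V) : Prop := 2 ≤ indeg E v
/-- Leaf: no outgoing arcs. -/
def IsLeaf {V : Type} (E : V → V → Prop) (v : V) : Prop := ∀ w, ¬ E v w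

/-- Acyclicity: no non-trivial path from a node to itself. -/
def Acyclic {V : Type} (E : V → V → Prop) : Prop := ∀ v, ¬ Relation.TransGen E v v

/-- A hybridization network: a rooted DAG whose single root has out-degree > 1. -/
structure IsHybNet {V : Type} (E : V → V → Prop) (r : V) : Prop where
  acyclic : Acyclic E
  isRoot : IsRootNode E r
  uniqueRoot : ∀ x, IsRootNode E x → x = r
  rootOut : 2 ≤ outdeg E r

/-- Tree-child condition: every internal node has a tree-node child. -/
def TreeChild {V : Type} (E : V → V → Prop) : Prop :=
  ∀ v, ¬ IsLeaf E v → ∃ w, E v w ∧ IsTreeNode E w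

/-- Time consistency: a temporal representation exists. -/
def TimeConsistent {V : Type} (E : V → V → Prop) : Prop :=
  ∃ τ : V → ℕ, ∀ u v, E u v → (IsTreeNode E v → τ u < τ v) ∧ (IsHybrid E v → τ u = τ v)

/-- The leaves are bijectively labeled by `S` via `leaf`. -/
def LabelsLeaves {V S : Type} (E : V → V → Prop) (leaf : S → V) : Prop :=
  Function.Injective leaf ∧ (∀ s, IsLeaf E (leaf s)) ∧ ∀ v, IsLeaf E v → ∃ s, leaf s = v

/-- Distance: length of a shortest path from `u` to `v`. -/
noncomputable def dist {V : Type} (E : V → V → Prop) (u v : V) : ℕ :=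
  sInf {n | ∃ p, WalkFromTo E u v p ∧ p.length = n + 1}

/-- Height: largest length of a path from `v` to a leaf. -/
noncomputable def height {V : Type} (E : V → V → Prop) (v : V) : ℕ :=
  sSup {n | ∃ p w, WalkFromTo E v w p ∧ IsLeaf E w ∧ p.length = n + 1}

/-- Common ancestors of `u` and `v` that are strict ancestors of at least one of them. -/
def CommonSemiStrictAnc {V : Type} (E : V → V → Prop) (u v : V) : Set V :=
  {x | Desc E x u ∧ Desc E x v ∧ (StrictAnc E x u ∨ StrictAnc E x v)}

/-- `x` is a least common semi-strict ancestor of `u` and `v`. -/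
def IsLCSA {V : Type} (E : V → V → Prop) (u v x : V) : Prop :=
  x ∈ CommonSemiStrictAnc E u v ∧ ∀ y ∈ CommonSemiStrictAnc E u v, height E x ≤ height E y

/-- The least common semi-strict ancestor `[u,v]` (the root `r` witnesses nonemptiness). -/
noncomputable def lcsa {V : Type} (E : V → V → Prop) (r u v : V) : V :=
  @Classical.epsilon V ⟨r⟩ (IsLCSA E u v)

/-- `ℓ_N(u,v)`: the distance from `[u,v]` to `u`. -/
noncomputable def ell {V : Type} (E : V → V → Prop) (r u v : V) : ℕ :=
  dist E (lcsa E r u v) u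

/-- `L_N(u,v) = ℓ_N(u,v) + ℓ_N(v,u)`: the LCSA-path length between `u` and `v`. -/
noncomputable def pathLen {V : Type} (E : V → V → Prop) (r u v : V) : ℕ :=
  ell E r u v + ell E r v u

/-- `h_N(u,v)`: −1 if `[u,v]` is a strict ancestor of `u` only, 1 if of `v` only, 0 if of both. -/
noncomputable def hval {V : Type} (E : V → V → Prop) (r u v : V) : ℤ :=
  if StrictAnc E (lcsa E r u v) u then
    (if StrictAnc E (lcsa E r u v) v then 0 else -1)
  else 1

/-- Siblings: distinct nodes sharing a parent. -/
def Sibling {V : Type} (E : V → V → Prop) (u v : V) : Prop :=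
  u ≠ v ∧ ∃ p, E p u ∧ E p v

/-- A tree path: a non-trivial path whose end and intermediate nodes are tree nodes. -/
def TreePath {V : Type} (E : V → V → Prop) (p : List V) (u v : V) : Prop :=
  WalkFromTo E u v p ∧ 2 ≤ p.length ∧ ∀ w ∈ p.tail, IsTreeNode E w

/-- `v` is a tree descendant of `u`. -/
def TreeDesc {V : Type} (E : V → V → Prop) (u v : V) : Prop := ∃ p, TreePath E p u v

/-- Quasi-binary hybridization network. -/
def QuasiBinary {V : Type} (E : V → V → Prop) : Prop :=
  ∀ v : V, (indeg E v, outdeg E v) ∈ ({(0,2),(1,0),(1,2),(2,0),(2,1),(2,2)} : Set (ℕ × ℕ))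

/-- Fully resolved hybridization network node types. -/
def FullyResolvedHyb {V : Type} (E : V → V → Prop) : Prop :=
  ∀ v : V, (indeg E v, outdeg E v) ∈ ({(0,2),(1,0),(1,2),(2,0),(2,2)} : Set (ℕ × ℕ))

/-- Fully resolved phylogenetic network node types. -/
def FullyResolvedPhylo {V : Type} (E : V → V → Prop) : Prop :=
  ∀ v : V, (indeg E v, outdeg E v) ∈ ({(0,2),(1,0),(1,2),(2,1)} : Set (ℕ × ℕ))

/-- Phylogenetic network condition: every hybrid node has exactly one child, a tree node. -/
def PhyloNet {V : Type} (E : V → V → Prop) : Prop :=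
  ∀ v, IsHybrid E v → ∃ w, E v w ∧ IsTreeNode E w ∧ ∀ x, E v x → x = w

/-!
A parent `v` of the leaf `i` whose other child is a tree leaf `j` is the only parent of `j`,
hence a strict ancestor of it, and has height one. So `[i,j]` has height at most one, which forces
it to be a common parent of the leaves `i` and `j` (a longer path down to a leaf would raise its
height), and `L_N(i,j) = 2`. Conversely, `L_N(i,j) = 2`
says exactly that `[i,j]` is a common parent of `i` and `j`. The common parents of `i, j₁` and of
`i, j₂` are distinct since no node has three children, so `i` is a hybrid with exactly these two
parents, and tree-childness then makes the siblings `j₁, j₂` tree nodes.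
-/

variable {V : Type} {E : V → V → Prop}

theorem Set.eq_or_eq_of_ncard_le_two {α : Type*} {s : Set α} (hs : s.ncard ≤ 2) (hfin : s.Finite)
    {a b c : α} (ha : a ∈ s) (hb : b ∈ s) (hc : c ∈ s) (hab : a ≠ b) : c = a ∨ c = b := by
  by_contra! h
  have := (Set.two_lt_ncard hfin).2 ⟨a, ha, b, hb, c, hc, hab, h.1.symm, h.2.symm⟩
  omega

theorem WalkFromTo.head_mem {u v : V} {p : List V} (h : WalkFromTo E u v p) : u ∈ p :=
  List.mem_of_mem_head? h.2.1

theorem walkFromTo_pair {u v : V} (h : E u v) : WalkFromTo E u v [u, v] :=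
  ⟨⟨List.cons_ne_nil _ _, List.IsChain.cons_cons h (.singleton _)⟩, rfl, rfl⟩

theorem WalkFromTo.eq_of_length_eq_one {u v : V} {p : List V} (h : WalkFromTo E u v p)
    (hp : p.length = 1) : u = v := by
  obtain ⟨a, rfl⟩ := List.length_eq_one_iff.1 hp
  obtain ⟨-, hu, hv⟩ := h
  simp_all

theorem WalkFromTo.adj_of_length_eq_two {u v : V} {p : List V} (h : WalkFromTo E u v p)
    (hp : p.length = 2) : E u v := by
  obtain ⟨a, b, rfl⟩ := List.length_eq_two.1 hp
  obtain ⟨⟨-, hc⟩, hu, hv⟩ := h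
  simp only [List.head?_cons, List.getLast?_cons_cons, List.getLast?_singleton,
    Option.some.injEq] at hu hv
  subst hu hv
  exact (List.isChain_cons_cons.1 hc).1

theorem WalkFromTo.exists_mem_adj_of_ne {p : List V} :
    ∀ {u v : V}, WalkFromTo E u v p → u ≠ v → ∃ w ∈ p, E w v := by
  induction p with
  | nil => exact fun h => absurd rfl h.1.1
  | cons a l ih =>
    rintro u v ⟨⟨-, hc⟩, hu, hv⟩ huv
    cases l with
    | nil => simp_all
    | cons b l =>
      simp only [List.head?_cons, Option.some.injEq] at hu
      subst hu
      have hab := (List.isChain_cons_cons.1 hc).1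
      by_cases hbv : b = v
      · exact ⟨a, List.mem_cons_self, hbv ▸ hab⟩
      · obtain ⟨w, hw, hwv⟩ :=
          ih ⟨⟨List.cons_ne_nil _ _, (List.isChain_cons_cons.1 hc).2⟩, rfl, hv⟩ hbv
        exact ⟨w, List.mem_cons_of_mem _ hw, hwv⟩

theorem Desc.exists_walkFromTo {u v : V} (h : Desc E u v) : ∃ p, WalkFromTo E u v p := by
  obtain ⟨l, hc, hl⟩ := List.exists_isChain_cons_of_relationReflTransGen h
  refine ⟨u :: l, ⟨List.cons_ne_nil _ _, hc⟩, rfl, ?_⟩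
  rw [List.getLast?_eq_some_getLast (List.cons_ne_nil _ _), hl]

theorem IsLeaf.eq_of_desc {u v : V} (hu : IsLeaf E u) (h : Desc E u v) : u = v := by
  rcases Relation.ReflTransGen.cases_head h with rfl | ⟨w, huw, -⟩
  · rfl
  · exact absurd huw (hu w)

theorem Acyclic.nodup_of_isChain (hac : Acyclic E) {p : List V} (hp : p.IsChain E) :
    p.Nodup := by
  have hpw : p.Pairwise (Relation.TransGen E) :=
    List.isChain_iff_pairwise.1 (hp.imp fun _ _ => .single)
  exact hpw.imp fun h hab => by subst hab; exact hac _ h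

theorem Desc.exists_walkFromTo_length_eq_dist {u v : V} (h : Desc E u v) :
    ∃ p, WalkFromTo E u v p ∧ p.length = dist E u v + 1 := by
  obtain ⟨p, hp⟩ := h.exists_walkFromTo
  have hlen : 0 < p.length := List.length_pos_iff.2 hp.1.1
  exact Nat.sInf_mem (s := {n | ∃ p, WalkFromTo E u v p ∧ p.length = n + 1})
    ⟨p.length - 1, p, hp, by omega⟩

theorem Desc.one_le_dist {u v : V} (h : Desc E u v) (huv : u ≠ v) : 1 ≤ dist E u v := by
  obtain ⟨p, hp, hlen⟩ := h.exists_walkFromTo_length_eq_dist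
  by_contra! h0
  exact huv (hp.eq_of_length_eq_one (by omega))

theorem Desc.adj_of_dist_eq_one {u v : V} (h : Desc E u v) (h1 : dist E u v = 1) : E u v := by
  obtain ⟨p, hp, hlen⟩ := h.exists_walkFromTo_length_eq_dist
  exact hp.adj_of_length_eq_two (by omega)

theorem dist_eq_one_of_adj {u v : V} (h : E u v) (huv : u ≠ v) : dist E u v = 1 :=
  le_antisymm (Nat.sInf_le ⟨[u, v], walkFromTo_pair h, rfl⟩)
    (Desc.one_le_dist (.single h) huv)

theorem height_le_one_of_forall_adj_isLeaf {v : V} (h : ∀ w, E v w → IsLeaf E w) :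
    height E v ≤ 1 := by
  refine csSup_le' ?_
  rintro n ⟨p, w, ⟨⟨-, hc⟩, hv, -⟩, -, hlen⟩
  match p, hc, hv with
  | [_], _, _ | [_, _], _, _ =>
    simp only [List.length_cons, List.length_nil] at hlen
    omega
  | a :: b :: c :: _, hc, hv =>
    simp only [List.head?_cons, Option.some.injEq] at hv
    subst hv
    obtain ⟨hab, hbc⟩ := List.isChain_cons_cons.1 hc
    exact absurd (List.isChain_cons_cons.1 hbc).1 (h b hab c)

theorem Acyclic.le_height [Fintype V] (hac : Acyclic E) {v w : V} {p : List V}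
    (hp : WalkFromTo E v w p) (hw : IsLeaf E w) : p.length - 1 ≤ height E v := by
  have hbdd : BddAbove {n | ∃ p w, WalkFromTo E v w p ∧ IsLeaf E w ∧ p.length = n + 1} := by
    refine ⟨Fintype.card V, ?_⟩
    rintro n ⟨q, _, hq, -, hlen⟩
    have := (hac.nodup_of_isChain hq.1.2).length_le_card
    omega
  have hlen : 0 < p.length := List.length_pos_iff.2 hp.1.1
  exact le_csSup hbdd ⟨p, w, hp, hw, by omega⟩

theorem Acyclic.adj_of_height_le_one [Fintype V] (hac : Acyclic E) {x w : V} (hd : Desc E x w)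
    (hxw : x ≠ w) (hw : IsLeaf E w) (hx : height E x ≤ 1) : E x w := by
  obtain ⟨p, hp, hlen⟩ := hd.exists_walkFromTo_length_eq_dist
  have := hac.le_height hp hw
  have := hd.one_le_dist hxw
  exact hp.adj_of_length_eq_two (by omega)

theorem IsTreeNode.eq_of_adj [Finite V] {v a b : V} (hv : IsTreeNode E v) (ha : E a v)
    (hb : E b v) : a = b :=
  (Set.ncard_le_one (Set.toFinite _)).1 hv a ha b hb

theorem isHybrid_of_adj_of_adj [Finite V] {v a b : V} (hab : a ≠ b) (ha : E a v) (hb : E b v) :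
    IsHybrid E v :=
  (Set.one_lt_ncard (Set.toFinite _)).2 ⟨a, ha, b, hb, hab⟩

theorem FullyResolvedHyb.indeg_le_two (hfr : FullyResolvedHyb E) (v : V) : indeg E v ≤ 2 := by
  have := hfr v
  simp only [Set.mem_insert_iff, Set.mem_singleton_iff, Prod.mk.injEq] at this
  omega

theorem FullyResolvedHyb.outdeg_le_two (hfr : FullyResolvedHyb E) (v : V) : outdeg E v ≤ 2 := by
  have := hfr v
  simp only [Set.mem_insert_iff, Set.mem_singleton_iff, Prod.mk.injEq] at this
  omega

theorem FullyResolvedHyb.parent_eq_or_eq [Finite V] (hfr : FullyResolvedHyb E) {v a b c : V}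
    (hab : a ≠ b) (ha : E a v) (hb : E b v) (hc : E c v) : c = a ∨ c = b :=
  Set.eq_or_eq_of_ncard_le_two (hfr.indeg_le_two v) (Set.toFinite _) ha hb hc hab

theorem FullyResolvedHyb.child_eq_or_eq [Finite V] (hfr : FullyResolvedHyb E) {v a b c : V}
    (hab : a ≠ b) (ha : E v a) (hb : E v b) (hc : E v c) : c = a ∨ c = b :=
  Set.eq_or_eq_of_ncard_le_two (hfr.outdeg_le_two v) (Set.toFinite _) ha hb hc hab

theorem TreeChild.isTreeNode_of_sibling_isHybrid [Finite V] (htc : TreeChild E)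
    (hfr : FullyResolvedHyb E) {v a b : V} (hab : a ≠ b) (ha : E v a) (hb : E v b)
    (hhyb : IsHybrid E a) : IsTreeNode E b := by
  obtain ⟨w, hw, hwt⟩ := htc v fun h => h a ha
  rcases hfr.child_eq_or_eq hab ha hb hw with rfl | rfl
  · exact absurd (hhyb.trans hwt) (by decide)
  · exact hwt

theorem IsLeaf.ne_of_desc {u v x : V} (hu : IsLeaf E u) (hx : Desc E x v) (huv : u ≠ v) :
    x ≠ u := by
  rintro rfl
  exact huv (hu.eq_of_desc hx)

theorem IsHybNet.desc_root [Finite V] {r : V} (hnet : IsHybNet E r) (v : V) : Desc E r v := by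
  have : IsTrans V (Relation.TransGen E) := ⟨fun _ _ _ => .trans⟩
  have : Std.Irrefl (Relation.TransGen E) := ⟨hnet.acyclic⟩
  have hwf : WellFounded E :=
    Subrelation.wf .single (Finite.wellFounded_of_trans_of_irrefl (Relation.TransGen E))
  induction v using hwf.induction with
  | _ v ih =>
    by_cases hvr : v = r
    · exact hvr ▸ .refl
    · obtain ⟨u, hu⟩ : ∃ u, E u v := by
        by_contra! h
        exact hvr (hnet.uniqueRoot v h)
      exact (ih u hu).tail hu

theorem IsHybNet.strictAnc_root [Finite V] {r : V} (hnet : IsHybNet E r) (v : V) :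
    StrictAnc E r v :=
  ⟨hnet.desc_root v, fun r' _ hr' hp => hnet.uniqueRoot r' hr' ▸ hp.head_mem⟩

theorem strictAnc_of_forall_adj_eq {v j : V} (h : E v j) (hpar : ∀ u, E u j → u = v) :
    StrictAnc E v j := by
  refine ⟨.single h, fun r' p hr' hp => ?_⟩
  obtain ⟨w, hw, hwj⟩ := hp.exists_mem_adj_of_ne fun hr'j => hr' v (hr'j ▸ h)
  exact hpar w hwj ▸ hw

theorem commonSemiStrictAnc_comm (u v : V) :
    CommonSemiStrictAnc E u v = CommonSemiStrictAnc E v u := by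
  ext x
  exact ⟨fun ⟨hu, hv, hs⟩ => ⟨hv, hu, hs.symm⟩, fun ⟨hv, hu, hs⟩ => ⟨hu, hv, hs.symm⟩⟩

theorem lcsa_comm (r u v : V) : lcsa E r u v = lcsa E r v u := by
  have : IsLCSA E u v = IsLCSA E v u := by
    funext x
    rw [IsLCSA, IsLCSA, commonSemiStrictAnc_comm]
  rw [lcsa, lcsa, this]

theorem pathLen_eq_dist_add_dist (r u v : V) :
    pathLen E r u v = dist E (lcsa E r u v) u + dist E (lcsa E r u v) v := by
  rw [pathLen, ell, ell, lcsa_comm r v u]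

theorem isLCSA_lcsa (r : V) {u v : V} (hne : (CommonSemiStrictAnc E u v).Nonempty) :
    IsLCSA E u v (lcsa E r u v) :=
  Classical.epsilon_spec ⟨Function.argminOn (height E) _ hne, Function.argminOn_mem _ _ hne,
    fun _ hy => Function.argminOn_le _ _ hy⟩

theorem pathLen_eq_two_of_adj_of_adj [Fintype V] (hac : Acyclic E) (hfr : FullyResolvedHyb E)
    (r : V) {v i j : V} (hi : IsLeaf E i) (hj : IsLeaf E j) (hij : i ≠ j) (hvi : E v i)
    (hvj : E v j) (hjt : IsTreeNode E j) : pathLen E r i j = 2 := by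
  have hv : v ∈ CommonSemiStrictAnc E i j :=
    ⟨.single hvi, .single hvj,
      .inr (strictAnc_of_forall_adj_eq hvj fun _ hu => hjt.eq_of_adj hu hvj)⟩
  have hvh : height E v ≤ 1 := height_le_one_of_forall_adj_isLeaf fun w hw => by
    rcases hfr.child_eq_or_eq hij hvi hvj hw with rfl | rfl
    exacts [hi, hj]
  obtain ⟨⟨hdi, hdj, -⟩, hmin⟩ := isLCSA_lcsa r ⟨v, hv⟩
  have hxh := (hmin v hv).trans hvh
  have hxi := hi.ne_of_desc hdj hij
  have hxj := hj.ne_of_desc hdi hij.symm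
  rw [pathLen_eq_dist_add_dist, dist_eq_one_of_adj (hac.adj_of_height_le_one hdi hxi hi hxh) hxi,
    dist_eq_one_of_adj (hac.adj_of_height_le_one hdj hxj hj hxh) hxj]

theorem adj_lcsa_of_pathLen_eq_two [Finite V] {r : V} (hnet : IsHybNet E r) {i j : V}
    (hi : IsLeaf E i) (hj : IsLeaf E j) (hij : i ≠ j) (h : pathLen E r i j = 2) :
    E (lcsa E r i j) i ∧ E (lcsa E r i j) j := by
  have hr : r ∈ CommonSemiStrictAnc E i j :=
    ⟨hnet.desc_root i, hnet.desc_root j, .inl (hnet.strictAnc_root i)⟩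
  obtain ⟨⟨hdi, hdj, -⟩, -⟩ := isLCSA_lcsa r ⟨r, hr⟩
  have hi1 := hdi.one_le_dist (hi.ne_of_desc hdj hij)
  have hj1 := hdj.one_le_dist (hj.ne_of_desc hdi hij.symm)
  rw [pathLen_eq_dist_add_dist] at h
  exact ⟨hdi.adj_of_dist_eq_one (by omega), hdj.adj_of_dist_eq_one (by omega)⟩

theorem stmt10_general {V : Type} [Fintype V] (E : V → V → Prop) (r : V)
    (hnet : IsHybNet E r) (hfr : FullyResolvedHyb E)
    (htc : TreeChild E)
    (i j1 j2 : V) (hi : IsLeaf E i) (hj1 : IsLeaf E j1) (hj2 : IsLeaf E j2)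
    (h12 : j1 ≠ j2) (hij1 : i ≠ j1) (hij2 : i ≠ j2) :
    (IsHybrid E i ∧ ∃ v1 v2, v1 ≠ v2 ∧ E v1 i ∧ E v2 i ∧
        (∀ u, E u i → u = v1 ∨ u = v2) ∧
        E v1 j1 ∧ E v2 j2 ∧ IsTreeNode E j1 ∧ IsTreeNode E j2) ↔
      (pathLen E r i j1 = 2 ∧ pathLen E r i j2 = 2) := by
  constructor
  · rintro ⟨-, v1, v2, -, hv1i, hv2i, -, hv1j1, hv2j2, hj1t, hj2t⟩
    exact ⟨pathLen_eq_two_of_adj_of_adj hnet.acyclic hfr r hi hj1 hij1 hv1i hv1j1 hj1t,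
      pathLen_eq_two_of_adj_of_adj hnet.acyclic hfr r hi hj2 hij2 hv2i hv2j2 hj2t⟩
  · rintro ⟨h1, h2⟩
    obtain ⟨hx1i, hx1j1⟩ := adj_lcsa_of_pathLen_eq_two hnet hi hj1 hij1 h1
    obtain ⟨hx2i, hx2j2⟩ := adj_lcsa_of_pathLen_eq_two hnet hi hj2 hij2 h2
    have hx12 : lcsa E r i j1 ≠ lcsa E r i j2 := fun h =>
      (hfr.child_eq_or_eq hij1 hx1i hx1j1 (h ▸ hx2j2)).elim (hij2 ·.symm) (h12 ·.symm)
    have hhyb : IsHybrid E i := isHybrid_of_adj_of_adj hx12 hx1i hx2i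
    exact ⟨hhyb, _, _, hx12, hx1i, hx2i, fun _ hu => hfr.parent_eq_or_eq hx12 hx1i hx2i hu,
      hx1j1, hx2j2, htc.isTreeNode_of_sibling_isHybrid hfr hij1 hx1i hx1j1 hhyb,
      htc.isTreeNode_of_sibling_isHybrid hfr hij2 hx2i hx2j2 hhyb⟩

/-- In a fully resolved TCTC hybridization network, the reduction
`H_0(i;j1,j2)` can be applied iff `L_N(i,j1) = 2` and `L_N(i,j2) = 2`. -/
theorem stmt10 {V : Type} [Fintype V] (E : V → V → Prop) (r : V)
    (hnet : IsHybNet E r) (hfr : FullyResolvedHyb E)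
    (htc : TreeChild E) (hti : TimeConsistent E)
    (i j1 j2 : V) (hi : IsLeaf E i) (hj1 : IsLeaf E j1) (hj2 : IsLeaf E j2)
    (h12 : j1 ≠ j2) (hij1 : i ≠ j1) (hij2 : i ≠ j2) :
    (IsHybrid E i ∧ ∃ v1 v2, v1 ≠ v2 ∧ E v1 i ∧ E v2 i ∧
        (∀ u, E u i → u = v1 ∨ u = v2) ∧
        E v1 j1 ∧ E v2 j2 ∧ IsTreeNode E j1 ∧ IsTreeNode E j2) ↔
      (pathLen E r i j1 = 2 ∧ pathLen E r i j2 = 2) :=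
  stmt10_general E r hnet hfr htc i j1 j2 hi hj1 hj2 h12 hij1 hij2
end

section
/- In a tree-child time consistent hybridization network, if u and v are distinct nodes having a hybrid child in common, then neither u is an ancestor of v through a path containing a tree node other than its origin, nor symmetrically; in particular, u is not a tree descendant of v and v is not a tree descendant of u. -/
/-! A temporal representation `τ` takes the same value on all parents of a hybrid node, whereas
along any path that enters a tree node it increases strictly; so two parents of a common hybrid
child cannot be joined by such a path. -/

open Classical

theorem List.IsChain.lt_getLast_of_mem {α β : Type*} [Preorder β] {r : α → α → Prop}
    {f : α → β} {s : α → Prop} (hle : ∀ ⦃x y⦄, r x y → f x ≤ f y)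
    (hlt : ∀ ⦃x y⦄, r x y → s y → f x < f y) {a : α} {l : List α}
    (hl : List.IsChain r (a :: l)) {w : α} (hw : w ∈ l) (hs : s w) :
    f a < f ((a :: l).getLast (List.cons_ne_nil _ _)) := by
  induction l generalizing a with
  | nil => simp at hw
  | cons b l ih =>
    rw [List.isChain_cons_cons] at hl
    rw [List.getLast_cons_cons]
    rcases List.mem_cons.mp hw with rfl | hw
    · have hb : Relation.ReflTransGen (· ≤ ·) (f w) (f ((w :: l).getLast (List.cons_ne_nil _ _))) :=
        (List.relationReflTransGen_of_exists_isChain_cons l hl.2 rfl).lift f hle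
      rw [Relation.reflTransGen_eq_self] at hb
      exact (hlt hl.1 hs).trans_le hb
    · exact (hle hl.1).trans_lt (ih hl.2 hw)

lemma TreePath.exists_mem_tail {V : Type} {E : V → V → Prop} {p : List V} {u v : V}
    (h : TreePath E p u v) : ∃ w ∈ p.tail, IsTreeNode E w := by
  obtain ⟨-, hlen, htree⟩ := h
  have : p.tail ≠ [] := List.ne_nil_of_length_pos (by rw [List.length_tail]; omega)
  obtain ⟨w, hw⟩ := List.exists_mem_of_ne_nil _ this
  exact ⟨w, hw, htree w hw⟩

def IsTemporalRepr {V : Type} (E : V → V → Prop) (τ : V → ℕ) : Prop :=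
  ∀ u v, E u v → (IsTreeNode E v → τ u < τ v) ∧ (IsHybrid E v → τ u = τ v)

namespace IsTemporalRepr

variable {V : Type} {E : V → V → Prop} {τ : V → ℕ}

lemma le_of_adj (hτ : IsTemporalRepr E τ) {u v : V} (h : E u v) : τ u ≤ τ v := by
  rcases le_or_gt (indeg E v) 1 with hv | hv
  · exact ((hτ u v h).1 hv).le
  · exact ((hτ u v h).2 hv).le

lemma eq_of_adj_hybrid (hτ : IsTemporalRepr E τ) {u v c : V} (hu : E u c) (hv : E v c)
    (hc : IsHybrid E c) : τ u = τ v :=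
  ((hτ u c hu).2 hc).trans ((hτ v c hv).2 hc).symm

lemma lt_of_walkFromTo (hτ : IsTemporalRepr E τ) {u v : V} {p : List V}
    (hp : WalkFromTo E u v p) {w : V} (hw : w ∈ p.tail) (htw : IsTreeNode E w) : τ u < τ v := by
  obtain ⟨⟨hne, hchain⟩, hhead, hlast⟩ := hp
  cases p with
  | nil => exact absurd rfl hne
  | cons a l =>
    rw [List.head?_cons, Option.some_inj] at hhead
    rw [List.getLast?_eq_some_getLast (List.cons_ne_nil a l), Option.some_inj] at hlast
    subst hhead hlast
    exact List.IsChain.lt_getLast_of_mem (r := E) (f := τ) (fun _ _ h => hτ.le_of_adj h)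
      (fun x y h => (hτ x y h).1) hchain hw htw

lemma lt_of_treeDesc (hτ : IsTemporalRepr E τ) {u v : V} (h : TreeDesc E u v) : τ u < τ v := by
  obtain ⟨p, hp⟩ := h
  obtain ⟨w, hw, htw⟩ := hp.exists_mem_tail
  exact hτ.lt_of_walkFromTo hp.1 hw htw

end IsTemporalRepr

theorem stmt16_general {V : Type} (E : V → V → Prop)
    (hti : TimeConsistent E)
    (u v c : V) (huc : E u c) (hvc : E v c) (hc : IsHybrid E c) :
    (∀ p, WalkFromTo E u v p → ∀ w ∈ p.tail, ¬ IsTreeNode E w) ∧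
    (∀ p, WalkFromTo E v u p → ∀ w ∈ p.tail, ¬ IsTreeNode E w) ∧
    ¬ TreeDesc E u v ∧ ¬ TreeDesc E v u := by
  obtain ⟨τ, hτ⟩ : ∃ τ, IsTemporalRepr E τ := hti
  have hτuv : τ u = τ v := hτ.eq_of_adj_hybrid huc hvc hc
  refine ⟨fun p hp w hw htw => (hτ.lt_of_walkFromTo hp hw htw).ne hτuv,
    fun p hp w hw htw => (hτ.lt_of_walkFromTo hp hw htw).ne' hτuv,
    fun h => (hτ.lt_of_treeDesc h).ne hτuv, fun h => (hτ.lt_of_treeDesc h).ne' hτuv⟩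

/-- In a TCTC hybridization network, if distinct `u` and `v` share a hybrid
child, then no path between them contains a tree node other than its origin; in
particular neither is a tree descendant of the other. -/
theorem stmt16 {V : Type} [Fintype V] (E : V → V → Prop) (r : V)
    (hnet : IsHybNet E r) (htc : TreeChild E) (hti : TimeConsistent E)
    (u v c : V) (huv : u ≠ v) (huc : E u c) (hvc : E v c) (hc : IsHybrid E c) :
    (∀ p, WalkFromTo E u v p → ∀ w ∈ p.tail, ¬ IsTreeNode E w) ∧
    (∀ p, WalkFromTo E v u p → ∀ w ∈ p.tail, ¬ IsTreeNode E w) ∧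
    ¬ TreeDesc E u v ∧ ¬ TreeDesc E v u :=
  stmt16_general E hti u v c huc hvc hc
end
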